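/- arXiv:2407.18403 — 2 statements merged into one kernel-verified Lean document; each statement's English description precedes it below -/
import Mathlib

section
/- For every γ ≥ 0, every y ∈ ℝ², and every x ∈ ℝ², the Hessian of ℓ_γ satisfies xᵀ ∇²ℓ_γ(y) x ≥ ( 1 + γ ψ̃(y) − 2γ |y| |∇ψ̃(y)| − (γ/2) |y|² ‖∇²ψ̃(y)‖ ) |x|². Consequently, for every γ ∈ [0, γ_s), every y ∈ ℝ², and every x ∈ ℝ² with x ≠ 0, one has xᵀ ∇²ℓ_γ(y) x ≥ (1 − γ S) |x|² > 0; in particular ℓ_γ is strictly convex on ℝ². -/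
open MeasureTheory Set Filter Metric
open scoped RealInnerProductSpace ENNReal NNReal Topology

noncomputable section

/-- The bump profile `ψ(s) = exp(-1/(1-s²))` for `|s| < 1` and `0` otherwise. -/
def bump (s : ℝ) : ℝ := if |s| < 1 then Real.exp (-(1 / (1 - s ^ 2))) else 0

/-- The obstacle function `ψ̃(y) = ψ(|y - z|/σ)`. -/
def psit (z : EuclideanSpace ℝ (Fin 2)) (σ : ℝ) (y : EuclideanSpace ℝ (Fin 2)) : ℝ :=
  bump (‖y - z‖ / σ)

/-- The running cost `ℓ_γ(y) = (1/2)|y|²(1 + γ ψ̃(y))`. -/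
def runCost (z : EuclideanSpace ℝ (Fin 2)) (σ γ : ℝ) (y : EuclideanSpace ℝ (Fin 2)) : ℝ :=
  1 / 2 * ‖y‖ ^ 2 * (1 + γ * psit z σ y)

/-- `S = sup_{y ∈ closedBall z σ} ( 2|y| |∇ψ̃(y)| + (1/2)|y|² ‖∇²ψ̃(y)‖ )`. -/
def Sconst (z : EuclideanSpace ℝ (Fin 2)) (σ : ℝ) : ℝ :=
  sSup ((fun y => 2 * ‖y‖ * ‖gradient (psit z σ) y‖
    + 1 / 2 * ‖y‖ ^ 2 * ‖iteratedFDeriv ℝ 2 (psit z σ) y‖) '' Metric.closedBall z σ)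

/-- The threshold `γ_s = 1/S`. -/
def gammaS (z : EuclideanSpace ℝ (Fin 2)) (σ : ℝ) : ℝ := 1 / Sconst z σ

/-- The trajectory of `y' = u`, `y(0) = y₀`. -/
def traj (y₀ : EuclideanSpace ℝ (Fin 2)) (u : ℝ → EuclideanSpace ℝ (Fin 2)) (t : ℝ) :
    EuclideanSpace ℝ (Fin 2) :=
  y₀ + ∫ s in (0 : ℝ)..t, u s

/-- Cost of the control `u` for the obstacle problem (with values in `ℝ≥0∞`). -/
def obsCost (z : EuclideanSpace ℝ (Fin 2)) (σ γ β : ℝ) (y₀ : EuclideanSpace ℝ (Fin 2))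
    (u : ℝ → EuclideanSpace ℝ (Fin 2)) : ℝ≥0∞ :=
  ∫⁻ t in Ioi (0 : ℝ), ENNReal.ofReal (runCost z σ γ (traj y₀ u t) + β / 2 * ‖u t‖ ^ 2)

/-- The value function `V_γ` of the obstacle problem (with values in `ℝ≥0∞`). -/
def Vgamma (z : EuclideanSpace ℝ (Fin 2)) (σ γ β : ℝ) (y₀ : EuclideanSpace ℝ (Fin 2)) : ℝ≥0∞ :=
  ⨅ (u : ℝ → EuclideanSpace ℝ (Fin 2)) (_ : MemLp u 2 (volume.restrict (Ioi 0))),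
    obsCost z σ γ β y₀ u

/-- The real-valued value function of the obstacle problem. -/
def VgammaR (z : EuclideanSpace ℝ (Fin 2)) (σ γ β : ℝ) (y₀ : EuclideanSpace ℝ (Fin 2)) : ℝ :=
  (Vgamma z σ γ β y₀).toReal

end
open scoped ContDiff

namespace Statement10Aux

abbrev E2 := EuclideanSpace ℝ (Fin 2)

lemma bump_eq (s : ℝ) : bump s = expNegInvGlue (1 - s ^ 2) := by
  unfold bump expNegInvGlue
  have h : |s| < 1 ↔ ¬ (1 - s ^ 2 ≤ 0) := by
    rw [not_le, sub_pos, ← sq_lt_one_iff_abs_lt_one]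
  by_cases hs : |s| < 1
  · rw [if_pos hs, if_neg (h.mp hs)]
    rw [one_div]
  · rw [if_neg hs, if_pos (by by_contra hc; exact hs (h.mpr hc))]

lemma psit_eq (z : E2) (σ : ℝ) :
    psit z σ = fun y => expNegInvGlue (1 - ‖y - z‖ ^ 2 / σ ^ 2) := by
  funext y
  rw [psit, bump_eq, div_pow]

lemma contDiff_psit (z : E2) (σ : ℝ) : ContDiff ℝ ∞ (psit z σ) := by
  rw [psit_eq]
  have h1 : ContDiff ℝ ∞ (fun y : E2 => 1 - ‖y - z‖ ^ 2 / σ ^ 2) := by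
    apply contDiff_const.sub
    exact ((contDiff_id.sub contDiff_const).norm_sq ℝ).div_const _
  exact expNegInvGlue.contDiff.comp h1

lemma psit_nonneg (z : E2) (σ : ℝ) (y : E2) : 0 ≤ psit z σ y := by
  rw [psit, bump_eq]; exact expNegInvGlue.nonneg _

lemma hasFDerivAt_half_norm_sq (y : E2) :
    HasFDerivAt (fun w : E2 => 1 / 2 * ‖w‖ ^ 2) (innerSL ℝ y) y := by
  have h := ((hasFDerivAt_id y).inner ℝ (hasFDerivAt_id y)).const_mul (1/2 : ℝ)
  have e1 : (fun y : E2 => 1 / 2 * ⟪id y, id y⟫) = fun w : E2 => 1 / 2 * ‖w‖ ^ 2 := by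
    funext w
    simp only [id_eq]
    rw [real_inner_self_eq_norm_sq]
  rw [e1] at h
  refine h.congr_fderiv ?_
  · ext v
    simp [fderivInnerCLM_apply, real_inner_comm]
    ring

lemma master (z : E2) (σ γ : ℝ) :
    ∃ F : E2 → (E2 →L[ℝ] ℝ), ∃ G : E2 → (E2 →L[ℝ] E2 →L[ℝ] ℝ),
      (∀ w, HasFDerivAt (runCost z σ γ) (F w) w) ∧
      (∀ w, HasFDerivAt F (G w) w) ∧
      (∀ y x, iteratedFDeriv ℝ 2 (runCost z σ γ) y ![x, x] = G y x x) ∧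
      (∀ y x, G y x x
          = (1 + γ * psit z σ y) * ‖x‖ ^ 2
            + 2 * (γ * (⟪y, x⟫ * ⟪gradient (psit z σ) y, x⟫))
            + γ / 2 * ‖y‖ ^ 2 * iteratedFDeriv ℝ 2 (psit z σ) y ![x, x]) := by
  have hP : ContDiff ℝ ∞ (psit z σ) := contDiff_psit z σ
  set P := psit z σ with hPdef
  have hPd : Differentiable ℝ P := hP.differentiable (by simp)
  have hP'C : ContDiff ℝ ∞ (fderiv ℝ P) := hP.fderiv_right (by exact_mod_cast le_top)
  have hP'd : Differentiable ℝ (fderiv ℝ P) := hP'C.differentiable (by simp)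
  set g : E2 → ℝ := fun w => 1 + γ * P w with hgdef
  have hgC : ContDiff ℝ ∞ g := contDiff_const.add (contDiff_const.mul hP)
  have hgd : Differentiable ℝ g := hgC.differentiable (by simp)
  set g' : E2 → (E2 →L[ℝ] ℝ) := fun w => fderiv ℝ g w with hg'def
  have hg'eq : ∀ w, g' w = γ • fderiv ℝ P w := by
    intro w
    rw [hg'def]
    simp only [hgdef]
    rw [fderiv_const_add, fderiv_const_mul (hPd w) γ]
  have hg'd : Differentiable ℝ g' := by
    have : g' = fun w => γ • fderiv ℝ P w := funext hg'eq
    rw [this]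
    exact hP'd.const_smul γ
  have hg''eq : ∀ w, fderiv ℝ g' w = γ • fderiv ℝ (fderiv ℝ P) w := by
    intro w
    have : g' = fun w => γ • fderiv ℝ P w := funext hg'eq
    rw [this, fderiv_fun_const_smul (hP'd w) γ]
  let J : E2 →L[ℝ] E2 →L[ℝ] ℝ := innerSL ℝ
  have hJapp : ∀ a b : E2, J a b = ⟪a, b⟫ := fun a b => rfl
  set F : E2 → (E2 →L[ℝ] ℝ) := fun w => (1 / 2 * ‖w‖ ^ 2) • g' w + g w • J w
    with hFdef
  have hF : ∀ w, HasFDerivAt (runCost z σ γ) (F w) w := by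
    intro w
    exact (hasFDerivAt_half_norm_sq w).mul (hgd w).hasFDerivAt
  have key : ∀ w, HasFDerivAt F
      ((1 / 2 * ‖w‖ ^ 2) • fderiv ℝ g' w + (innerSL ℝ w).smulRight (g' w)
        + (g w • J + (g' w).smulRight (J w))) w := by
    intro w
    have hA := (hasFDerivAt_half_norm_sq w).smul (hg'd w).hasFDerivAt
    have hB := (hgd w).hasFDerivAt.smul J.hasFDerivAt
    exact hA.add hB
  have hG : ∀ w, HasFDerivAt F (fderiv ℝ F w) w := fun w =>
    (key w).differentiableAt.hasFDerivAt
  have hfd : fderiv ℝ (runCost z σ γ) = F := funext fun w => (hF w).fderiv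
  refine ⟨F, fun w => fderiv ℝ F w, hF, hG, ?_, ?_⟩
  · intro y x
    rw [iteratedFDeriv_two_apply, hfd]
    simp
  · intro y x
    have e1 : g' y x = γ * ⟪gradient P y, x⟫ := by
      rw [hg'eq y]
      have : ⟪gradient P y, x⟫ = fderiv ℝ P y x := by
        rw [gradient]
        exact InnerProductSpace.toDual_symm_apply
      rw [this]
      simp
    have e2 : fderiv ℝ g' y x x = γ * iteratedFDeriv ℝ 2 P y ![x, x] := by
      rw [hg''eq y, iteratedFDeriv_two_apply]
      simp
    have expand : fderiv ℝ F y x x = 1 / 2 * ‖y‖ ^ 2 * (fderiv ℝ g' y x x)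
        + ⟪y, x⟫ * (g' y x) + (g y * ‖x‖ ^ 2 + (g' y x) * ⟪y, x⟫) := by
      rw [(key y).fderiv]
      simp only [ContinuousLinearMap.add_apply, ContinuousLinearMap.smul_apply,
        ContinuousLinearMap.smulRight_apply, smul_eq_mul, innerSL_apply_apply]
      simp only [hJapp]
      rw [real_inner_self_eq_norm_sq]
    rw [expand, e1, e2, hgdef]
    ring

lemma hess_eval (z : E2) (σ γ : ℝ) (y x : E2) :
    iteratedFDeriv ℝ 2 (runCost z σ γ) y ![x, x]
      = (1 + γ * psit z σ y) * ‖x‖ ^ 2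
        + 2 * (γ * (⟪y, x⟫ * ⟪gradient (psit z σ) y, x⟫))
        + γ / 2 * ‖y‖ ^ 2 * iteratedFDeriv ℝ 2 (psit z σ) y ![x, x] := by
  obtain ⟨F, G, _, _, h3, h4⟩ := master z σ γ
  rw [h3, h4]

lemma part1 (z : E2) (σ γ : ℝ) (hγ : 0 ≤ γ) (y x : E2) :
    (1 + γ * psit z σ y - 2 * γ * ‖y‖ * ‖gradient (psit z σ) y‖
        - γ / 2 * ‖y‖ ^ 2 * ‖iteratedFDeriv ℝ 2 (psit z σ) y‖) * ‖x‖ ^ 2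
      ≤ iteratedFDeriv ℝ 2 (runCost z σ γ) y ![x, x] := by
  rw [hess_eval]
  have hab : -(‖y‖ * ‖x‖ * (‖gradient (psit z σ) y‖ * ‖x‖))
      ≤ ⟪y, x⟫ * ⟪gradient (psit z σ) y, x⟫ := by
    have h1 : |⟪y, x⟫ * ⟪gradient (psit z σ) y, x⟫|
        ≤ ‖y‖ * ‖x‖ * (‖gradient (psit z σ) y‖ * ‖x‖) := by
      rw [abs_mul]
      exact mul_le_mul (abs_real_inner_le_norm _ _) (abs_real_inner_le_norm _ _)
        (abs_nonneg _) (by positivity)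
    linarith [neg_abs_le (⟪y, x⟫ * ⟪gradient (psit z σ) y, x⟫)]
  have hc : -(‖iteratedFDeriv ℝ 2 (psit z σ) y‖ * (‖x‖ * ‖x‖))
      ≤ iteratedFDeriv ℝ 2 (psit z σ) y ![x, x] := by
    have h1 := (iteratedFDeriv ℝ 2 (psit z σ) y).le_opNorm ![x, x]
    have h2 : (∏ i, ‖(![x, x]) i‖) = ‖x‖ * ‖x‖ := by
      rw [Fin.prod_univ_two]
      simp
    rw [h2] at h1
    rw [Real.norm_eq_abs] at h1
    linarith [neg_abs_le (iteratedFDeriv ℝ 2 (psit z σ) y ![x, x])]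
  have hx2 : ‖x‖ ^ 2 = ‖x‖ * ‖x‖ := sq ‖x‖ ▸ (sq ‖x‖).symm ▸ (pow_two ‖x‖)
  nlinarith [mul_le_mul_of_nonneg_left hab hγ,
    mul_le_mul_of_nonneg_left hc (by positivity : (0:ℝ) ≤ γ / 2 * ‖y‖ ^ 2),
    sq_nonneg ‖x‖, norm_nonneg x, norm_nonneg y]

end Statement10Aux
namespace Statement10Aux

lemma continuous_gradient_psit (z : E2) (σ : ℝ) : Continuous (gradient (psit z σ)) := by
  have hP'C : ContDiff ℝ ∞ (fderiv ℝ (psit z σ)) :=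
    (contDiff_psit z σ).fderiv_right (by exact_mod_cast le_top)
  have : gradient (psit z σ)
      = fun y => (InnerProductSpace.toDual ℝ E2).symm (fderiv ℝ (psit z σ) y) := rfl
  rw [this]
  exact (InnerProductSpace.toDual ℝ E2).symm.continuous.comp hP'C.continuous

lemma continuous_Phi (z : E2) (σ : ℝ) :
    Continuous (fun y : E2 => 2 * ‖y‖ * ‖gradient (psit z σ) y‖
      + 1 / 2 * ‖y‖ ^ 2 * ‖iteratedFDeriv ℝ 2 (psit z σ) y‖) := by
  have h1 : Continuous (iteratedFDeriv ℝ 2 (psit z σ)) :=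
    (contDiff_psit z σ).continuous_iteratedFDeriv (by decide)
  have h2 := continuous_gradient_psit z σ
  fun_prop

lemma bdd (z : E2) (σ : ℝ) :
    BddAbove ((fun y => 2 * ‖y‖ * ‖gradient (psit z σ) y‖
      + 1 / 2 * ‖y‖ ^ 2 * ‖iteratedFDeriv ℝ 2 (psit z σ) y‖) '' Metric.closedBall z σ) :=
  ((isCompact_closedBall z σ).image (continuous_Phi z σ)).bddAbove

lemma psit_zero_outside (z : E2) (σ : ℝ) (hσ : 0 < σ) {w : E2} (hw : σ < ‖w - z‖) :
    psit z σ w = 0 := by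
  rw [psit, bump]
  rw [if_neg]
  rw [not_lt]
  rw [abs_of_nonneg (by positivity)]
  rw [le_div_iff₀ hσ]
  linarith

lemma Phi_le_S (z : E2) (σ : ℝ) (hσ : 0 < σ) (y : E2) :
    2 * ‖y‖ * ‖gradient (psit z σ) y‖
      + 1 / 2 * ‖y‖ ^ 2 * ‖iteratedFDeriv ℝ 2 (psit z σ) y‖ ≤ Sconst z σ := by
  by_cases hy : y ∈ Metric.closedBall z σ
  · exact le_csSup (bdd z σ) ⟨y, hy, rfl⟩
  · have hdist : σ < ‖y - z‖ := by
      rw [Metric.mem_closedBall, not_le, dist_eq_norm] at hy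
      exact hy
    have hopen : IsOpen {w : E2 | σ < ‖w - z‖} :=
      isOpen_lt continuous_const ((continuous_id.sub continuous_const).norm)
    have hev : psit z σ =ᶠ[nhds y] (fun _ => (0:ℝ)) := by
      filter_upwards [hopen.mem_nhds hdist] with w hw
      exact psit_zero_outside z σ hσ hw
    have hgrad : gradient (psit z σ) y = 0 := by
      rw [gradient, hev.fderiv_eq, fderiv_const_apply, map_zero]
    have hiter : iteratedFDeriv ℝ 2 (psit z σ) y = 0 := by
      rw [← iteratedFDerivWithin_univ]
      have h0 : psit z σ =ᶠ[nhdsWithin y Set.univ] (fun _ => (0:ℝ)) := by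
        rw [nhdsWithin_univ]; exact hev
      rw [h0.iteratedFDerivWithin_eq (psit_zero_outside z σ hσ hdist) 2]
      rw [iteratedFDerivWithin_univ]
      rw [iteratedFDeriv_zero_fun]
      rfl
    rw [hgrad, hiter]
    simp only [norm_zero]
    have h0 : (0:ℝ) ≤ Sconst z σ := by
      refine le_trans ?_ (le_csSup (bdd z σ) ⟨z, Metric.mem_closedBall_self hσ.le, rfl⟩)
      positivity
    simpa using h0

lemma S_nonneg (z : E2) (σ : ℝ) (hσ : 0 < σ) : 0 ≤ Sconst z σ := by
  refine le_trans ?_ (le_csSup (bdd z σ) ⟨z, Metric.mem_closedBall_self hσ.le, rfl⟩)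
  positivity

end Statement10Aux
namespace Statement10Aux

lemma part2_bound (z : E2) (σ : ℝ) (hσ : 0 < σ) (γ : ℝ) (hγ : 0 ≤ γ) (y x : E2) :
    (1 - γ * Sconst z σ) * ‖x‖ ^ 2 ≤ iteratedFDeriv ℝ 2 (runCost z σ γ) y ![x, x] := by
  refine le_trans ?_ (part1 z σ γ hγ y x)
  apply mul_le_mul_of_nonneg_right _ (sq_nonneg _)
  have h1 := Phi_le_S z σ hσ y
  have h2 := psit_nonneg z σ y
  nlinarith [mul_le_mul_of_nonneg_left h1 hγ, mul_nonneg hγ h2]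

lemma one_sub_pos (z : E2) (σ : ℝ) (hσ : 0 < σ) (γ : ℝ) (hγ : 0 ≤ γ)
    (hγ' : γ < gammaS z σ) : 0 < 1 - γ * Sconst z σ := by
  rcases lt_or_eq_of_le (S_nonneg z σ hσ) with hS | hS
  · rw [gammaS, lt_div_iff₀ hS] at hγ'
    linarith
  · rw [← hS, mul_zero]
    norm_num

lemma strict (z : E2) (σ : ℝ) (hσ : 0 < σ) (γ : ℝ) (hγ : 0 ≤ γ)
    (hγ' : γ < gammaS z σ) : StrictConvexOn ℝ Set.univ (runCost z σ γ) := by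
  obtain ⟨F, G, hF, hG, h3, _⟩ := master z σ γ
  refine ⟨convex_univ, ?_⟩
  intro p hp q hq hpq a b ha hb hab
  set v := q - p with hv
  set φ : ℝ → ℝ := fun t => runCost z σ γ (p + t • v) with hφ
  have hc : ∀ t : ℝ, HasDerivAt (fun t : ℝ => p + t • v) v t := by
    intro t
    simpa using ((hasDerivAt_id t).smul_const v).const_add p
  have hd1 : ∀ t : ℝ, HasDerivAt φ (F (p + t • v) v) t := fun t =>
    (hF _).comp_hasDerivAt t (hc t)
  have hd1' : deriv φ = fun t => F (p + t • v) v := funext fun t => (hd1 t).deriv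
  have hd2 : ∀ t : ℝ, HasDerivAt (deriv φ) (G (p + t • v) v v) t := by
    intro t
    rw [hd1']
    have h := (hG (p + t • v)).comp_hasDerivAt t (hc t)
    have h2 := h.clm_apply (hasDerivAt_const t v)
    simpa using h2
  have hpos : ∀ t ∈ interior (Set.univ : Set ℝ), 0 < deriv^[2] φ t := by
    intro t _
    have e : deriv^[2] φ t = deriv (deriv φ) t := rfl
    rw [e, (hd2 t).deriv]
    have hb1 := part2_bound z σ hσ γ hγ (p + t • v) v
    rw [h3] at hb1
    have hb2 : 0 < (1 - γ * Sconst z σ) * ‖v‖ ^ 2 := by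
      have h1 := one_sub_pos z σ hσ γ hγ hγ'
      have hvne : v ≠ 0 := sub_ne_zero.mpr (Ne.symm hpq)
      have hv2 : 0 < ‖v‖ ^ 2 := pow_pos (norm_pos_iff.mpr hvne) 2
      exact mul_pos h1 hv2
    linarith
  have hcont : ContinuousOn φ Set.univ :=
    (continuous_iff_continuousAt.mpr fun t => (hd1 t).differentiableAt.continuousAt).continuousOn
  have hsc := strictConvexOn_of_deriv2_pos convex_univ hcont hpos
  have key := hsc.2 (Set.mem_univ (0:ℝ)) (Set.mem_univ (1:ℝ)) zero_ne_one ha hb hab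
  have e0 : φ 0 = runCost z σ γ p := by simp [hφ]
  have e1 : φ 1 = runCost z σ γ q := by simp [hφ, hv]
  have eab : a • (0:ℝ) + b • (1:ℝ) = b := by simp
  rw [eab] at key
  have epoint : p + b • v = a • p + b • q := by
    rw [hv]
    have haeq : a = 1 - b := by linarith
    subst haeq
    module
  have e2 : φ b = runCost z σ γ (a • p + b • q) := by
    show runCost z σ γ (p + b • v) = _
    rw [epoint]
  rw [e0, e1, e2] at key
  simpa using key

end Statement10Aux

/-- Lower bound on the Hessian quadratic form of `ℓ_γ`, and strict convexity
of `ℓ_γ` for `γ ∈ [0, γ_s)`. -/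
theorem statement_10 (σ : ℝ) (hσ : 0 < σ)
    (z : EuclideanSpace ℝ (Fin 2)) (hz1 : z 1 = 0) (hz0 : z 0 < -σ) :
    (∀ γ : ℝ, 0 ≤ γ → ∀ y x : EuclideanSpace ℝ (Fin 2),
      (1 + γ * psit z σ y - 2 * γ * ‖y‖ * ‖gradient (psit z σ) y‖
          - γ / 2 * ‖y‖ ^ 2 * ‖iteratedFDeriv ℝ 2 (psit z σ) y‖) * ‖x‖ ^ 2
        ≤ iteratedFDeriv ℝ 2 (runCost z σ γ) y ![x, x]) ∧
    (∀ γ : ℝ, 0 ≤ γ → γ < gammaS z σ →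
      (∀ y x : EuclideanSpace ℝ (Fin 2), x ≠ 0 →
        (1 - γ * Sconst z σ) * ‖x‖ ^ 2 ≤ iteratedFDeriv ℝ 2 (runCost z σ γ) y ![x, x] ∧
        0 < (1 - γ * Sconst z σ) * ‖x‖ ^ 2) ∧
      StrictConvexOn ℝ Set.univ (runCost z σ γ)) := by

  constructor
  · intro γ hγ y x
    exact Statement10Aux.part1 z σ γ hγ y x
  · intro γ hγ hγ'
    refine ⟨?_, Statement10Aux.strict z σ hσ γ hγ hγ'⟩
    intro y x hx
    refine ⟨Statement10Aux.part2_bound z σ hσ γ hγ y x, ?_⟩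
    exact mul_pos (Statement10Aux.one_sub_pos z σ hσ γ hγ hγ')
      (pow_pos (norm_pos_iff.mpr hx) 2)
end

section
/- Let γ ∈ [0, γ_s) and y₀ ∈ ℝ² with V_γ(y₀) < ∞. If u₁, u₂ ∈ L²((0,∞);ℝ²) both attain the infimum defining V_γ(y₀), i.e. ∫₀^∞ ( ℓ_γ(y₀ + ∫₀^t u_i(s) ds) + (β/2)|u_i(t)|² ) dt = V_γ(y₀) for i = 1, 2, then u₁ = u₂ in L²((0,∞);ℝ²); that is, the optimal control of the obstacle problem is unique. -/
open MeasureTheory Set Filter Metric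
open scoped RealInnerProductSpace ENNReal NNReal Topology

section auxlemmas

variable {z : EuclideanSpace ℝ (Fin 2)} {σ γ β : ℝ} {y₀ : EuclideanSpace ℝ (Fin 2)}

lemma psit_eq (hσ : 0 < σ) (y : EuclideanSpace ℝ (Fin 2)) :
    psit z σ y = expNegInvGlue (1 - ‖y - z‖ ^ 2 / σ ^ 2) := by
  unfold psit bump expNegInvGlue
  rw [← div_pow]
  by_cases h : (‖y - z‖ / σ) ^ 2 < 1
  · rw [if_pos ((sq_lt_one_iff_abs_lt_one _).mp h), if_neg (by nlinarith), one_div]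
  · rw [if_neg fun hc => h ((sq_lt_one_iff_abs_lt_one _).mpr hc),
      if_pos (by push_neg at h; nlinarith)]

lemma contDiff_psit (hσ : 0 < σ) : ContDiff ℝ 2 (psit z σ) := by
  have h : psit z σ = fun y => expNegInvGlue (1 - ‖y - z‖ ^ 2 / σ ^ 2) :=
    funext (psit_eq hσ)
  rw [h]
  have h1 : ContDiff ℝ 2 (fun y : EuclideanSpace ℝ (Fin 2) => 1 - ‖y - z‖ ^ 2 / σ ^ 2) :=
    contDiff_const.sub (((contDiff_id.sub contDiff_const).norm_sq ℝ).div_const _)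
  have h2 : ContDiff ℝ 2 expNegInvGlue := expNegInvGlue.contDiff
  exact h2.comp h1

lemma psit_nonneg (z : EuclideanSpace ℝ (Fin 2)) (σ : ℝ) (y : EuclideanSpace ℝ (Fin 2)) :
    0 ≤ psit z σ y := by
  unfold psit bump
  split_ifs
  exacts [(Real.exp_pos _).le, le_rfl]

lemma isOpen_far (z : EuclideanSpace ℝ (Fin 2)) (σ : ℝ) :
    IsOpen {w : EuclideanSpace ℝ (Fin 2) | σ < ‖w - z‖} :=
  isOpen_lt continuous_const (continuous_id.sub continuous_const).norm

lemma psit_eventually_zero (hσ : 0 < σ) {y : EuclideanSpace ℝ (Fin 2)} (hy : σ < ‖y - z‖) :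
    psit z σ =ᶠ[nhds y] fun _ => (0 : ℝ) := by
  filter_upwards [(isOpen_far z σ).mem_nhds hy] with w hw
  have h1 : (1 : ℝ) < ‖w - z‖ / σ := (one_lt_div hσ).mpr hw
  simp only [psit, bump]
  rw [if_neg]
  rw [abs_of_nonneg (by positivity)]
  exact not_lt.mpr h1.le

lemma fderiv_psit_zero (hσ : 0 < σ) {y : EuclideanSpace ℝ (Fin 2)} (hy : σ < ‖y - z‖) :
    fderiv ℝ (psit z σ) y = 0 := by
  rw [(psit_eventually_zero hσ hy).fderiv_eq]
  exact fderiv_const_apply 0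

lemma fderiv2_psit_zero (hσ : 0 < σ) {y : EuclideanSpace ℝ (Fin 2)} (hy : σ < ‖y - z‖) :
    fderiv ℝ (fderiv ℝ (psit z σ)) y = 0 := by
  have hev : fderiv ℝ (psit z σ) =ᶠ[nhds y]
      fun _ => (0 : EuclideanSpace ℝ (Fin 2) →L[ℝ] ℝ) := by
    filter_upwards [(isOpen_far z σ).mem_nhds hy] with w hw
    exact fderiv_psit_zero hσ hw
  rw [hev.fderiv_eq]
  exact fderiv_const_apply 0

lemma norm_gradient_eq (f : EuclideanSpace ℝ (Fin 2) → ℝ) (y : EuclideanSpace ℝ (Fin 2)) :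
    ‖gradient f y‖ = ‖fderiv ℝ f y‖ :=
  LinearIsometryEquiv.norm_map (InnerProductSpace.toDual ℝ (EuclideanSpace ℝ (Fin 2))).symm _

lemma le_Sconst (hσ : 0 < σ) {y : EuclideanSpace ℝ (Fin 2)} (hy : y ∈ Metric.closedBall z σ) :
    2 * ‖y‖ * ‖fderiv ℝ (psit z σ) y‖
      + 1 / 2 * ‖y‖ ^ 2 * ‖iteratedFDeriv ℝ 2 (psit z σ) y‖ ≤ Sconst z σ := by
  have h1 : Continuous fun w => ‖gradient (psit z σ) w‖ := by
    have he : (fun w => ‖gradient (psit z σ) w‖) = fun w => ‖fderiv ℝ (psit z σ) w‖ :=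
      funext fun w => norm_gradient_eq _ w
    rw [he]
    exact ((contDiff_psit hσ).continuous_fderiv two_ne_zero).norm
  have h2 : Continuous fun w => ‖iteratedFDeriv ℝ 2 (psit z σ) w‖ :=
    (ContDiff.continuous_iteratedFDeriv le_rfl (contDiff_psit hσ)).norm
  have hcont : ContinuousOn (fun w => 2 * ‖w‖ * ‖gradient (psit z σ) w‖
      + 1 / 2 * ‖w‖ ^ 2 * ‖iteratedFDeriv ℝ 2 (psit z σ) w‖) (Metric.closedBall z σ) :=
    (((continuous_const.mul continuous_norm).mul h1).add
      ((continuous_const.mul (continuous_norm.pow 2)).mul h2)).continuousOn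
  have hb : BddAbove ((fun w => 2 * ‖w‖ * ‖gradient (psit z σ) w‖
      + 1 / 2 * ‖w‖ ^ 2 * ‖iteratedFDeriv ℝ 2 (psit z σ) w‖) '' Metric.closedBall z σ) :=
    ((isCompact_closedBall z σ).image_of_continuousOn hcont).bddAbove
  have hle := le_csSup hb (Set.mem_image_of_mem _ hy)
  rw [norm_gradient_eq] at hle
  exact hle

lemma convexOn_runCost (hσ : 0 < σ) (hγ0 : 0 ≤ γ) (hγS : γ * Sconst z σ ≤ 1)
    (a v : EuclideanSpace ℝ (Fin 2)) :
    ConvexOn ℝ Set.univ (fun t : ℝ => runCost z σ γ (a + t • v)) := by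
  have hf : ContDiff ℝ 2 (psit z σ) := contDiff_psit hσ
  set f := psit z σ with hfdef
  have hcd : ∀ t : ℝ, HasDerivAt (fun t : ℝ => a + t • v) v t := fun t => by
    simpa using ((hasDerivAt_id t).smul_const v).const_add a
  set c : ℝ → EuclideanSpace ℝ (Fin 2) := fun t => a + t • v with hcdef
  set m : ℝ → ℝ := fun t => f (c t) with hm_def
  set m1 : ℝ → ℝ := fun t => fderiv ℝ f (c t) v with hm1_def
  set m2 : ℝ → ℝ := fun t => fderiv ℝ (fderiv ℝ f) (c t) v v with hm2_def
  have hdf : Differentiable ℝ f := hf.differentiable two_ne_zero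
  have hdf' : Differentiable ℝ (fderiv ℝ f) :=
    (hf.fderiv_right (by norm_num : (1 : WithTop ℕ∞) + 1 ≤ 2)).differentiable one_ne_zero
  have hm : ∀ t, HasDerivAt m (m1 t) t := fun t =>
    (hdf (c t)).hasFDerivAt.comp_hasDerivAt t (hcd t)
  have hm1 : ∀ t, HasDerivAt m1 (m2 t) t := by
    intro t
    have h1 : HasDerivAt (fun s => fderiv ℝ f (c s)) (fderiv ℝ (fderiv ℝ f) (c t) v) t :=
      (hdf' (c t)).hasFDerivAt.comp_hasDerivAt t (hcd t)
    simpa using h1.clm_apply (hasDerivAt_const t v)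
  set p : ℝ → ℝ := fun t => 1 / 2 * ‖c t‖ ^ 2 with hp_def
  set p1 : ℝ → ℝ := fun t => (inner ℝ a v : ℝ) + t * ‖v‖ ^ 2 with hp1_def
  have hprep : p = fun t => 1 / 2 * ‖a‖ ^ 2 + t * (inner ℝ a v : ℝ) + t ^ 2 * (1 / 2 * ‖v‖ ^ 2) := by
    funext t
    have h := norm_add_sq_real a (t • v)
    rw [real_inner_smul_right, norm_smul] at h
    simp only [hp_def, hcdef]
    rw [h]
    simp only [Real.norm_eq_abs, mul_pow, sq_abs]
    ring
  have hp : ∀ t, HasDerivAt p (p1 t) t := by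
    intro t
    have h : HasDerivAt (fun t : ℝ => 1 / 2 * ‖a‖ ^ 2 + t * (inner ℝ a v : ℝ) + t ^ 2 * (1 / 2 * ‖v‖ ^ 2))
        (1 * (inner ℝ a v : ℝ) + ((2 : ℕ) * t ^ 1) * (1 / 2 * ‖v‖ ^ 2)) t :=
      (((hasDerivAt_id t).mul_const _).const_add _).add ((hasDerivAt_pow 2 t).mul_const _)
    rw [hprep]
    convert h using 1
    simp only [hp1_def]
    push_cast
    ring
  have hp1c : ∀ t, p1 t = (inner ℝ (c t) v : ℝ) := by
    intro t
    simp only [hp1_def, hcdef, inner_add_left, real_inner_smul_left,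
      real_inner_self_eq_norm_sq]
  have hp1 : ∀ t, HasDerivAt p1 (‖v‖ ^ 2) t := fun t => by
    simpa only [one_mul, id_eq] using
      ((hasDerivAt_id t).mul_const (‖v‖ ^ 2)).const_add (inner ℝ a v : ℝ)
  set w : ℝ → ℝ := fun t => 1 + γ * m t with hw_def
  have hw : ∀ t, HasDerivAt w (γ * m1 t) t := fun t => ((hm t).const_mul γ).const_add 1
  set g : ℝ → ℝ := fun t => p t * w t with hg_def
  set G : ℝ → ℝ := fun t => p1 t * w t + p t * (γ * m1 t) with hG_def
  have hg : ∀ t, HasDerivAt g (G t) t := fun t => (hp t).mul (hw t)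
  set G2 : ℝ → ℝ := fun t =>
    (‖v‖ ^ 2 * w t + p1 t * (γ * m1 t)) + (p1 t * (γ * m1 t) + p t * (γ * m2 t)) with hG2_def
  have hG : ∀ t, HasDerivAt G (G2 t) t := fun t =>
    ((hp1 t).mul (hw t)).add ((hp t).mul ((hm1 t).const_mul γ))
  have hdg : deriv g = G := funext fun s => (hg s).deriv
  have hG2nn : ∀ t, 0 ≤ G2 t := by
    intro t
    have hw1 : 1 ≤ w t := by
      have hψ := psit_nonneg z σ (c t)
      have hγψ : 0 ≤ γ * m t := mul_nonneg hγ0 hψ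
      simp only [hw_def]
      linarith
    have hv2 : (0 : ℝ) ≤ ‖v‖ ^ 2 := sq_nonneg _
    by_cases hball : ‖c t - z‖ ≤ σ
    · have hS := le_Sconst (z := z) hσ (mem_closedBall_iff_norm.mpr hball)
      have hm1b : |m1 t| ≤ ‖fderiv ℝ f (c t)‖ * ‖v‖ := by
        rw [← Real.norm_eq_abs]
        exact (fderiv ℝ f (c t)).le_opNorm v
      have hm2b : |m2 t| ≤ ‖iteratedFDeriv ℝ 2 f (c t)‖ * (‖v‖ * ‖v‖) := by
        have he : m2 t = iteratedFDeriv ℝ 2 f (c t) ![v, v] := by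
          rw [iteratedFDeriv_two_apply]
          simp [hm2_def]
        rw [he, ← Real.norm_eq_abs]
        calc ‖iteratedFDeriv ℝ 2 f (c t) ![v, v]‖
            ≤ ‖iteratedFDeriv ℝ 2 f (c t)‖ * ∏ i, ‖(![v, v]) i‖ :=
              (iteratedFDeriv ℝ 2 f (c t)).le_opNorm _
          _ = ‖iteratedFDeriv ℝ 2 f (c t)‖ * (‖v‖ * ‖v‖) := by
              simp [Fin.prod_univ_two]
      have hp1b : |p1 t| ≤ ‖c t‖ * ‖v‖ := by
        rw [hp1c t]
        exact abs_real_inner_le_norm _ _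
      have b1 : |p1 t * (γ * m1 t)| ≤ ‖c t‖ * ‖v‖ * (γ * (‖fderiv ℝ f (c t)‖ * ‖v‖)) := by
        rw [abs_mul (p1 t) (γ * m1 t), abs_mul γ (m1 t), abs_of_nonneg hγ0]
        exact mul_le_mul hp1b (mul_le_mul_of_nonneg_left hm1b hγ0) (by positivity)
          (by positivity)
      have b2 : |p t * (γ * m2 t)|
          ≤ 1 / 2 * ‖c t‖ ^ 2 * (γ * (‖iteratedFDeriv ℝ 2 f (c t)‖ * (‖v‖ * ‖v‖))) := by
        rw [abs_mul (p t) (γ * m2 t), abs_mul γ (m2 t), abs_of_nonneg hγ0]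
        have hpabs : |p t| = 1 / 2 * ‖c t‖ ^ 2 := by
          simp only [hp_def]
          rw [abs_of_nonneg (by positivity)]
        rw [hpabs]
        exact mul_le_mul_of_nonneg_left (mul_le_mul_of_nonneg_left hm2b hγ0) (by positivity)
      have hγSle : γ * (2 * ‖c t‖ * ‖fderiv ℝ f (c t)‖
          + 1 / 2 * ‖c t‖ ^ 2 * ‖iteratedFDeriv ℝ 2 f (c t)‖) ≤ 1 :=
        le_trans (mul_le_mul_of_nonneg_left hS hγ0) hγS
      have key1 := neg_abs_le (p1 t * (γ * m1 t))
      have key2 := neg_abs_le (p t * (γ * m2 t))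
      have key3 := mul_le_mul_of_nonneg_left hγSle hv2
      have key4 := mul_le_mul_of_nonneg_left hw1 hv2
      simp only [hG2_def]
      nlinarith [b1, b2, key1, key2, key3, key4]
    · push_neg at hball
      have hz1 : m1 t = 0 := by
        simp [hm1_def, hfdef, fderiv_psit_zero hσ hball]
      have hz2 : m2 t = 0 := by
        simp [hm2_def, hfdef, fderiv2_psit_zero hσ hball]
      simp only [hG2_def, hz1, hz2, mul_zero, add_zero]
      have : (0:ℝ) ≤ ‖v‖ ^ 2 * w t := mul_nonneg hv2 (by linarith)
      linarith
  have hconv : ConvexOn ℝ Set.univ g := by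
    apply convexOn_univ_of_deriv2_nonneg (fun t => (hg t).differentiableAt)
    · rw [hdg]
      exact fun t => (hG t).differentiableAt
    · intro t
      have hiter : deriv^[2] g t = deriv (deriv g) t := rfl
      rw [hiter, hdg, (hG t).deriv]
      exact hG2nn t
  have hfun : (fun t : ℝ => runCost z σ γ (a + t • v)) = g := by
    funext t
    simp only [hg_def, hp_def, hw_def, hm_def, hcdef, hfdef, runCost]
  rw [hfun]
  exact hconv

lemma runCost_midpoint (hσ : 0 < σ) (hγ0 : 0 ≤ γ) (hγS : γ * Sconst z σ ≤ 1)
    (a b : EuclideanSpace ℝ (Fin 2)) :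
    runCost z σ γ ((2 : ℝ)⁻¹ • (a + b)) ≤ 2⁻¹ * (runCost z σ γ a + runCost z σ γ b) := by
  have hcv := convexOn_runCost hσ hγ0 hγS a (b - a)
  have h := hcv.2 (Set.mem_univ (0 : ℝ)) (Set.mem_univ (1 : ℝ))
    (by norm_num : (0 : ℝ) ≤ 2⁻¹) (by norm_num : (0 : ℝ) ≤ 2⁻¹) (by norm_num)
  simp only [smul_eq_mul, mul_zero, mul_one, zero_add] at h
  have e1 : a + (2⁻¹ : ℝ) • (b - a) = (2 : ℝ)⁻¹ • (a + b) := by module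
  have e2 : a + (0 : ℝ) • (b - a) = a := by module
  have e3 : a + (1 : ℝ) • (b - a) = b := by module
  rw [e1, e2, e3] at h
  linarith

lemma gamma_mul_S_le_one (hγ0 : 0 ≤ γ) (hγ : γ < gammaS z σ) : γ * Sconst z σ ≤ 1 := by
  unfold gammaS at hγ
  rcases le_or_gt (Sconst z σ) 0 with hS | hS
  · have h1 : 1 / Sconst z σ ≤ 0 := one_div_nonpos.mpr hS
    linarith
  · exact ((lt_div_iff₀ hS).mp hγ).le

lemma runCost_nonneg (hγ0 : 0 ≤ γ) (y : EuclideanSpace ℝ (Fin 2)) : 0 ≤ runCost z σ γ y := by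
  unfold runCost
  have h1 := psit_nonneg z σ y
  have h2 : 0 ≤ γ * psit z σ y := mul_nonneg hγ0 h1
  have h3 : (0:ℝ) ≤ 1 / 2 * ‖y‖ ^ 2 := by positivity
  nlinarith

lemma integrableOn_of_memL2 {u : ℝ → EuclideanSpace ℝ (Fin 2)}
    (hu : MemLp u 2 (volume.restrict (Set.Ioi (0 : ℝ)))) (t : ℝ) :
    IntegrableOn u (Set.Ioc 0 t) := by
  have h1 : MemLp u 2 (volume.restrict (Set.Ioc (0 : ℝ) t)) :=
    hu.mono_measure (Measure.restrict_mono Set.Ioc_subset_Ioi_self le_rfl)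
  exact h1.integrable (by norm_num)

lemma traj_mid {u₁ u₂ : ℝ → EuclideanSpace ℝ (Fin 2)}
    (h₁ : MemLp u₁ 2 (volume.restrict (Set.Ioi (0 : ℝ))))
    (h₂ : MemLp u₂ 2 (volume.restrict (Set.Ioi (0 : ℝ)))) {t : ℝ} (ht : 0 ≤ t) :
    traj y₀ (fun s => (2 : ℝ)⁻¹ • (u₁ s + u₂ s)) t
      = (2 : ℝ)⁻¹ • (traj y₀ u₁ t + traj y₀ u₂ t) := by
  unfold traj
  rw [intervalIntegral.integral_of_le ht, intervalIntegral.integral_of_le ht,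
    intervalIntegral.integral_of_le ht]
  rw [integral_smul, integral_add (integrableOn_of_memL2 h₁ t) (integrableOn_of_memL2 h₂ t)]
  module

lemma aemeas_cost (hσ : 0 < σ) {u : ℝ → EuclideanSpace ℝ (Fin 2)}
    (hu : MemLp u 2 (volume.restrict (Set.Ioi (0 : ℝ)))) :
    AEMeasurable (fun t => ENNReal.ofReal (runCost z σ γ (traj y₀ u t) + β / 2 * ‖u t‖ ^ 2))
      (volume.restrict (Set.Ioi (0 : ℝ))) := by
  set ub := (Set.Ioi (0 : ℝ)).indicator u with hub
  have hii : ∀ a b : ℝ, IntervalIntegrable ub volume a b := by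
    intro a b
    rw [intervalIntegrable_iff, IntegrableOn, hub, integrable_indicator_iff measurableSet_Ioi,
      IntegrableOn, Measure.restrict_restrict measurableSet_Ioi]
    refine (integrableOn_of_memL2 hu (max a b)).mono_set fun x hx => ?_
    exact ⟨hx.1, hx.2.2⟩
  have hF : Continuous fun t => ∫ s in (0 : ℝ)..t, ub s :=
    intervalIntegral.continuous_primitive hii 0
  have htraj : (fun t => traj y₀ u t) =ᵐ[volume.restrict (Set.Ioi (0 : ℝ))]
      fun t => y₀ + ∫ s in (0 : ℝ)..t, ub s := by
    filter_upwards [ae_restrict_mem measurableSet_Ioi] with t ht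
    unfold traj
    congr 1
    rw [intervalIntegral.integral_of_le (le_of_lt ht),
      intervalIntegral.integral_of_le (le_of_lt ht)]
    exact setIntegral_congr_fun measurableSet_Ioc fun x hx =>
      (Set.indicator_of_mem (Set.Ioc_subset_Ioi_self hx) u).symm
  have hcontRC : Continuous (runCost z σ γ) := by
    have h := (contDiff_psit (z := z) hσ).continuous
    unfold runCost
    exact (continuous_const.mul (continuous_norm.pow 2)).mul
      (continuous_const.add (continuous_const.mul h))
  have h1 : AEStronglyMeasurable (fun t => runCost z σ γ (traj y₀ u t))
      (volume.restrict (Set.Ioi (0 : ℝ))) :=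
    ((hcontRC.comp (continuous_const.add hF)).aestronglyMeasurable).congr
      (htraj.symm.fun_comp (runCost z σ γ))
  exact ENNReal.measurable_ofReal.comp_aemeasurable
    (h1.aemeasurable.add (((hu.1.norm.aemeasurable).pow_const 2).const_mul (β / 2)))

end auxlemmas

/-- For `γ ∈ [0, γ_s)` the optimal control of the obstacle problem is
unique (as an element of `L²((0,∞);ℝ²)`). -/
theorem statement_11 (β σ : ℝ) (hβ : 0 < β) (hσ : 0 < σ)
    (z : EuclideanSpace ℝ (Fin 2)) (hz1 : z 1 = 0) (hz0 : z 0 < -σ)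
    (γ : ℝ) (hγ0 : 0 ≤ γ) (hγ : γ < gammaS z σ)
    (y₀ : EuclideanSpace ℝ (Fin 2)) (hfin : Vgamma z σ γ β y₀ < ⊤)
    (u₁ u₂ : ℝ → EuclideanSpace ℝ (Fin 2))
    (h₁ : MemLp u₁ 2 (volume.restrict (Ioi 0)))
    (h₂ : MemLp u₂ 2 (volume.restrict (Ioi 0)))
    (e₁ : obsCost z σ γ β y₀ u₁ = Vgamma z σ γ β y₀)
    (e₂ : obsCost z σ γ β y₀ u₂ = Vgamma z σ γ β y₀) :
    ∀ᵐ t ∂(volume.restrict (Ioi (0 : ℝ))), u₁ t = u₂ t := by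
  classical
  have hγS : γ * Sconst z σ ≤ 1 := gamma_mul_S_le_one hγ0 hγ
  set uh : ℝ → EuclideanSpace ℝ (Fin 2) := fun s => (2 : ℝ)⁻¹ • (u₁ s + u₂ s) with huh_def
  have huhL2 : MemLp uh 2 (volume.restrict (Ioi 0)) := (h₁.add h₂).const_smul ((2 : ℝ)⁻¹)
  have hVle : Vgamma z σ γ β y₀ ≤ obsCost z σ γ β y₀ uh := by
    rw [Vgamma]
    exact iInf_le_of_le uh (iInf_le _ huhL2)
  set D : ℝ → ℝ≥0∞ :=
    fun t => ENNReal.ofReal (β / 2 * ‖(2 : ℝ)⁻¹ • (u₁ t - u₂ t)‖ ^ 2) with hD_def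
  have hDmeas : AEMeasurable D (volume.restrict (Ioi (0 : ℝ))) := by
    refine ENNReal.measurable_ofReal.comp_aemeasurable ?_
    exact ((((h₁.1.sub h₂.1).const_smul ((2 : ℝ)⁻¹)).norm.aemeasurable).pow_const 2).const_mul
      (β / 2)
  have hpt : ∀ᵐ t ∂(volume.restrict (Ioi (0 : ℝ))),
      ENNReal.ofReal (runCost z σ γ (traj y₀ uh t) + β / 2 * ‖uh t‖ ^ 2) + D t
        ≤ 2⁻¹ * (ENNReal.ofReal (runCost z σ γ (traj y₀ u₁ t) + β / 2 * ‖u₁ t‖ ^ 2)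
          + ENNReal.ofReal (runCost z σ γ (traj y₀ u₂ t) + β / 2 * ‖u₂ t‖ ^ 2)) := by
    filter_upwards [ae_restrict_mem measurableSet_Ioi] with t ht
    have htm := traj_mid (y₀ := y₀) h₁ h₂ (le_of_lt ht)
    have hrc : runCost z σ γ (traj y₀ uh t)
        ≤ 2⁻¹ * (runCost z σ γ (traj y₀ u₁ t) + runCost z σ γ (traj y₀ u₂ t)) := by
      rw [huh_def, htm]
      exact runCost_midpoint hσ hγ0 hγS _ _
    have hpar : β / 2 * ‖uh t‖ ^ 2 + β / 2 * ‖(2 : ℝ)⁻¹ • (u₁ t - u₂ t)‖ ^ 2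
        = 2⁻¹ * (β / 2 * ‖u₁ t‖ ^ 2 + β / 2 * ‖u₂ t‖ ^ 2) := by
      have e1 : ‖(2 : ℝ)⁻¹ • (u₁ t + u₂ t)‖ ^ 2 = (2 : ℝ)⁻¹ ^ 2 * ‖u₁ t + u₂ t‖ ^ 2 := by
        rw [norm_smul, mul_pow]
        norm_num
      have e2 : ‖(2 : ℝ)⁻¹ • (u₁ t - u₂ t)‖ ^ 2 = (2 : ℝ)⁻¹ ^ 2 * ‖u₁ t - u₂ t‖ ^ 2 := by
        rw [norm_smul, mul_pow]
        norm_num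
      have e3 := norm_add_sq_real (u₁ t) (u₂ t)
      have e4 := norm_sub_sq_real (u₁ t) (u₂ t)
      simp only [huh_def]
      rw [e1, e2, e3, e4]
      ring
    have key : (runCost z σ γ (traj y₀ uh t) + β / 2 * ‖uh t‖ ^ 2)
        + β / 2 * ‖(2 : ℝ)⁻¹ • (u₁ t - u₂ t)‖ ^ 2
        ≤ 2⁻¹ * ((runCost z σ γ (traj y₀ u₁ t) + β / 2 * ‖u₁ t‖ ^ 2)
          + (runCost z σ γ (traj y₀ u₂ t) + β / 2 * ‖u₂ t‖ ^ 2)) := by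
      linarith
    have n0 : 0 ≤ runCost z σ γ (traj y₀ uh t) + β / 2 * ‖uh t‖ ^ 2 :=
      add_nonneg (runCost_nonneg hγ0 _) (by positivity)
    have n1 : 0 ≤ runCost z σ γ (traj y₀ u₁ t) + β / 2 * ‖u₁ t‖ ^ 2 :=
      add_nonneg (runCost_nonneg hγ0 _) (by positivity)
    have n2 : 0 ≤ runCost z σ γ (traj y₀ u₂ t) + β / 2 * ‖u₂ t‖ ^ 2 :=
      add_nonneg (runCost_nonneg hγ0 _) (by positivity)
    calc ENNReal.ofReal (runCost z σ γ (traj y₀ uh t) + β / 2 * ‖uh t‖ ^ 2) + D t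
        = ENNReal.ofReal ((runCost z σ γ (traj y₀ uh t) + β / 2 * ‖uh t‖ ^ 2)
            + β / 2 * ‖(2 : ℝ)⁻¹ • (u₁ t - u₂ t)‖ ^ 2) := by
          rw [hD_def, ENNReal.ofReal_add n0 (by positivity)]
      _ ≤ ENNReal.ofReal (2⁻¹ * ((runCost z σ γ (traj y₀ u₁ t) + β / 2 * ‖u₁ t‖ ^ 2)
            + (runCost z σ γ (traj y₀ u₂ t) + β / 2 * ‖u₂ t‖ ^ 2))) :=
          ENNReal.ofReal_le_ofReal key
      _ = 2⁻¹ * (ENNReal.ofReal (runCost z σ γ (traj y₀ u₁ t) + β / 2 * ‖u₁ t‖ ^ 2)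
            + ENNReal.ofReal (runCost z σ γ (traj y₀ u₂ t) + β / 2 * ‖u₂ t‖ ^ 2)) := by
          rw [ENNReal.ofReal_mul (by norm_num), ENNReal.ofReal_add n1 n2,
            ENNReal.ofReal_inv_of_pos two_pos, ENNReal.ofReal_ofNat]
  have hIneq : obsCost z σ γ β y₀ uh + ∫⁻ t in Ioi (0 : ℝ), D t ≤ Vgamma z σ γ β y₀ := by
    have hMuh := aemeas_cost (z := z) (γ := γ) (β := β) (y₀ := y₀) hσ huhL2
    have hM1 := aemeas_cost (z := z) (γ := γ) (β := β) (y₀ := y₀) hσ h₁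
    have step1 : obsCost z σ γ β y₀ uh + ∫⁻ t in Ioi (0 : ℝ), D t
        = ∫⁻ t in Ioi (0 : ℝ),
            (ENNReal.ofReal (runCost z σ γ (traj y₀ uh t) + β / 2 * ‖uh t‖ ^ 2) + D t) := by
      rw [obsCost, lintegral_add_left' hMuh]
    have step2 : ∫⁻ t in Ioi (0 : ℝ),
          (ENNReal.ofReal (runCost z σ γ (traj y₀ uh t) + β / 2 * ‖uh t‖ ^ 2) + D t)
        ≤ ∫⁻ t in Ioi (0 : ℝ),
            2⁻¹ * (ENNReal.ofReal (runCost z σ γ (traj y₀ u₁ t) + β / 2 * ‖u₁ t‖ ^ 2)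
              + ENNReal.ofReal (runCost z σ γ (traj y₀ u₂ t) + β / 2 * ‖u₂ t‖ ^ 2)) :=
      lintegral_mono_ae hpt
    have step3 : ∫⁻ t in Ioi (0 : ℝ),
          2⁻¹ * (ENNReal.ofReal (runCost z σ γ (traj y₀ u₁ t) + β / 2 * ‖u₁ t‖ ^ 2)
            + ENNReal.ofReal (runCost z σ γ (traj y₀ u₂ t) + β / 2 * ‖u₂ t‖ ^ 2))
        = Vgamma z σ γ β y₀ := by
      rw [lintegral_const_mul' _ _ (by norm_num), lintegral_add_left' hM1]
      have he1 : (∫⁻ t in Ioi (0 : ℝ),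
          ENNReal.ofReal (runCost z σ γ (traj y₀ u₁ t) + β / 2 * ‖u₁ t‖ ^ 2))
          = Vgamma z σ γ β y₀ := e₁
      have he2 : (∫⁻ t in Ioi (0 : ℝ),
          ENNReal.ofReal (runCost z σ γ (traj y₀ u₂ t) + β / 2 * ‖u₂ t‖ ^ 2))
          = Vgamma z σ γ β y₀ := e₂
      rw [he1, he2, ← two_mul, ← mul_assoc,
        ENNReal.inv_mul_cancel two_ne_zero ENNReal.ofNat_ne_top, one_mul]
    calc obsCost z σ γ β y₀ uh + ∫⁻ t in Ioi (0 : ℝ), D t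
        = _ := step1
      _ ≤ _ := step2
      _ = Vgamma z σ γ β y₀ := step3
  have hD0 : ∫⁻ t in Ioi (0 : ℝ), D t = 0 := by
    have h : Vgamma z σ γ β y₀ + ∫⁻ t in Ioi (0 : ℝ), D t ≤ Vgamma z σ γ β y₀ + 0 := by
      rw [add_zero]
      exact le_trans (add_le_add_left hVle _) hIneq
    exact le_zero_iff.mp ((ENNReal.add_le_add_iff_left hfin.ne).mp h)
  have hDz : ∀ᵐ t ∂(volume.restrict (Ioi (0 : ℝ))), D t = 0 :=
    (lintegral_eq_zero_iff' hDmeas).mp hD0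
  filter_upwards [hDz] with t ht
  rw [hD_def, ENNReal.ofReal_eq_zero] at ht
  have hnn : 0 ≤ ‖(2 : ℝ)⁻¹ • (u₁ t - u₂ t)‖ ^ 2 := sq_nonneg _
  have hle : ‖(2 : ℝ)⁻¹ • (u₁ t - u₂ t)‖ ^ 2 ≤ 0 := by nlinarith [ht, hβ]
  have hz' : ‖(2 : ℝ)⁻¹ • (u₁ t - u₂ t)‖ = 0 :=
    pow_eq_zero_iff two_ne_zero |>.mp (le_antisymm hle hnn)
  have h2 : (2 : ℝ)⁻¹ • (u₁ t - u₂ t) = 0 := norm_eq_zero.mp hz'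
  rcases smul_eq_zero.mp h2 with h | h
  · norm_num at h
  · exact sub_eq_zero.mp h
end
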